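/- Under the Kaluza-Klein hypotheses, the base Christoffel symbols of G satisfy Γ^δ_{αβ} = γ^δ_{αβ} − (ε/2) h^{δζ}(φ_β f_{ζα} + φ_α f_{ζβ}), where γ^δ_{αβ} = (1/2) h^{δζ}(∂_β h_{ζα} + ∂_α h_{ζβ} − ∂_ζ h_{αβ}) are the Christoffel symbols of h, and f_{αβ} = ∂_α φ_β − ∂_β φ_α. -/

import Mathlib

/-!
The Kaluza-Klein metric has the explicit inverse (block elimination of `G_{22} = ε`)
`G^{αβ} = h^{αβ}`, `G^{α2} = -h^{αζ} φ_ζ`, `G^{22} = 1/ε + h^{ζη} φ_ζ φ_η`.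
Hence in `Γ^δ_{αβ}` the index `ρ = 2` contributes `-(ε/2) h^{δζ} φ_ζ (∂_β φ_α + ∂_α φ_β)`, as
`∂_2 G_{αβ} = 0` by independence of `x²`. Expanding `∂(h_{ζα} + ε φ_ζ φ_α)` by the product rule in
the terms `ρ = ζ`, the `φ_ζ`-terms cancel against this contribution and the remaining `ε`-terms are
`-(ε/2) h^{δζ}(φ_β f_{ζα} + φ_α f_{ζβ})`.
-/

open Matrix

/-- Partial derivative in coordinate direction `μ` on ℝ³. -/
noncomputable def pd (μ : Fin 3) (F : (Fin 3 → ℝ) → ℝ) (x : Fin 3 → ℝ) : ℝ :=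
  fderiv ℝ F x (Pi.single μ 1)

/-- The Kaluza-Klein metric `G` with `G_{αβ} = h_{αβ} + ε φ_α φ_β`,
`G_{α2} = G_{2α} = ε φ_α`, `G_{22} = ε`. -/
noncomputable def KK (ε : ℝ) (h : Matrix (Fin 2) (Fin 2) ℝ) (φ : Fin 2 → ℝ) :
    Matrix (Fin 3) (Fin 3) ℝ :=
  Matrix.of fun μ ν =>
    if hμ : (μ : ℕ) < 2 then
      if hν : (ν : ℕ) < 2 then h ⟨(μ : ℕ), hμ⟩ ⟨(ν : ℕ), hν⟩ + ε * φ ⟨(μ : ℕ), hμ⟩ * φ ⟨(ν : ℕ), hν⟩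
      else ε * φ ⟨(μ : ℕ), hμ⟩
    else if hν : (ν : ℕ) < 2 then ε * φ ⟨(ν : ℕ), hν⟩ else ε

/-- Christoffel symbols `Γ^λ_{μν} = (1/2) G^{λρ}(∂_ν G_{ρμ} + ∂_μ G_{ρν} − ∂_ρ G_{μν})`. -/
noncomputable def chris (G : (Fin 3 → ℝ) → Matrix (Fin 3) (Fin 3) ℝ)
    (x : Fin 3 → ℝ) (l μ ν : Fin 3) : ℝ :=
  (1/2) * ∑ ρ, (G x)⁻¹ l ρ *
    (pd ν (fun y => G y ρ μ) x + pd μ (fun y => G y ρ ν) x - pd ρ (fun y => G y μ ν) x)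

/-- Abelian field strength `f_{αβ} = ∂_α φ_β − ∂_β φ_α` (base indices). -/
noncomputable def fs (φf : (Fin 3 → ℝ) → Fin 2 → ℝ) (x : Fin 3 → ℝ) (α β : Fin 2) : ℝ :=
  pd α.castSucc (fun y => φf y β) x - pd β.castSucc (fun y => φf y α) x

/-- Christoffel symbols `γ^δ_{αβ}` of the base metric `h`. -/
noncomputable def gam (hm : (Fin 3 → ℝ) → Matrix (Fin 2) (Fin 2) ℝ)
    (x : Fin 3 → ℝ) (δ α β : Fin 2) : ℝ :=
  (1/2) * ∑ ζ, (hm x)⁻¹ δ ζ *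
    (pd β.castSucc (fun y => hm y ζ α) x + pd α.castSucc (fun y => hm y ζ β) x
      - pd ζ.castSucc (fun y => hm y α β) x)

section PartialDerivative

variable {μ : Fin 3} {F G : (Fin 3 → ℝ) → ℝ} {x : Fin 3 → ℝ}

theorem pd_add (hF : DifferentiableAt ℝ F x) (hG : DifferentiableAt ℝ G x) :
    pd μ (fun y => F y + G y) x = pd μ F x + pd μ G x := by
  simp [pd, fderiv_fun_add hF hG]

theorem pd_mul (hF : DifferentiableAt ℝ F x) (hG : DifferentiableAt ℝ G x) :
    pd μ (fun y => F y * G y) x = pd μ F x * G x + F x * pd μ G x := by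
  simp only [pd, fderiv_fun_mul hF hG, _root_.add_apply, _root_.smul_apply, smul_eq_mul]
  ring

theorem pd_const_mul (c : ℝ) (hF : DifferentiableAt ℝ F x) :
    pd μ (fun y => c * F y) x = c * pd μ F x := by
  simp [pd, fderiv_const_mul hF c]

theorem pd_eq_zero_of_update_eq (hF : ∀ t, F (Function.update x μ t) = F x) : pd μ F x = 0 := by
  by_cases hd : DifferentiableAt ℝ F x
  · have hline : (fun t : ℝ => F (x + t • Pi.single μ 1)) = fun _ => F x := by
      funext t
      rw [← hF (x μ + t)]
      congr 1
      ext i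
      rcases eq_or_ne i μ with rfl | hi <;> simp [*]
    rw [pd, ← hd.lineDeriv_eq_fderiv, lineDeriv, hline, deriv_const]
  · simp [pd, fderiv_zero_of_not_differentiableAt hd]

end PartialDerivative

noncomputable def KKInv (ε : ℝ) (h : Matrix (Fin 2) (Fin 2) ℝ) (φ : Fin 2 → ℝ) :
    Matrix (Fin 3) (Fin 3) ℝ :=
  Matrix.of fun μ ν =>
    if hμ : (μ : ℕ) < 2 then
      if hν : (ν : ℕ) < 2 then h⁻¹ ⟨(μ : ℕ), hμ⟩ ⟨(ν : ℕ), hν⟩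
      else -∑ ζ, h⁻¹ ⟨(μ : ℕ), hμ⟩ ζ * φ ζ
    else if hν : (ν : ℕ) < 2 then -∑ ζ, φ ζ * h⁻¹ ζ ⟨(ν : ℕ), hν⟩
    else 1 / ε + ∑ ζ, ∑ η, φ ζ * h⁻¹ ζ η * φ η

section KaluzaKlein

variable (ε : ℝ) (h : Matrix (Fin 2) (Fin 2) ℝ) (φ : Fin 2 → ℝ)

@[simp] theorem KK_castSucc_castSucc (α β : Fin 2) :
    KK ε h φ α.castSucc β.castSucc = h α β + ε * φ α * φ β := by
  simp [KK, α.is_le, β.is_le]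

@[simp] theorem KK_castSucc_last (α : Fin 2) : KK ε h φ α.castSucc (Fin.last 2) = ε * φ α := by
  simp [KK, α.is_le]

@[simp] theorem KK_last_castSucc (β : Fin 2) : KK ε h φ (Fin.last 2) β.castSucc = ε * φ β := by
  simp [KK, β.is_le]

@[simp] theorem KK_last_last : KK ε h φ (Fin.last 2) (Fin.last 2) = ε := by
  simp [KK]

@[simp] theorem KKInv_castSucc_castSucc (α β : Fin 2) :
    KKInv ε h φ α.castSucc β.castSucc = h⁻¹ α β := by
  simp [KKInv, α.is_le, β.is_le]

@[simp] theorem KKInv_castSucc_last (α : Fin 2) :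
    KKInv ε h φ α.castSucc (Fin.last 2) = -∑ ζ, h⁻¹ α ζ * φ ζ := by
  simp [KKInv, α.is_le]

@[simp] theorem KKInv_last_castSucc (β : Fin 2) :
    KKInv ε h φ (Fin.last 2) β.castSucc = -∑ ζ, φ ζ * h⁻¹ ζ β := by
  simp [KKInv, β.is_le]

@[simp] theorem KKInv_last_last :
    KKInv ε h φ (Fin.last 2) (Fin.last 2) = 1 / ε + ∑ ζ, ∑ η, φ ζ * h⁻¹ ζ η * φ η := by
  simp [KKInv]

theorem KK_mul_KKInv (hε : ε ≠ 0) (hh : IsUnit h.det) : KK ε h φ * KKInv ε h φ = 1 := by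
  have hmul (α β : Fin 2) :
      h α 0 * h⁻¹ 0 β + h α 1 * h⁻¹ 1 β = (1 : Matrix (Fin 2) (Fin 2) ℝ) α β := by
    rw [← Matrix.mul_nonsing_inv h hh, Matrix.mul_apply, Fin.sum_univ_two]
  have hone (α : Fin 2) :
      (1 : Matrix (Fin 2) (Fin 2) ℝ) α 0 * φ 0 + (1 : Matrix (Fin 2) (Fin 2) ℝ) α 1 * φ 1 =
        φ α := by
    fin_cases α <;> simp [Matrix.one_apply]
  have hone_castSucc (α β : Fin 2) :
      (1 : Matrix (Fin 3) (Fin 3) ℝ) α.castSucc β.castSucc =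
        (1 : Matrix (Fin 2) (Fin 2) ℝ) α β := by
    simp [Matrix.one_apply]
  have hεinv : ε * (1 / ε) = 1 := mul_one_div_cancel hε
  ext i j
  rw [Matrix.mul_apply, Fin.sum_univ_castSucc]
  induction i using Fin.lastCases <;> induction j using Fin.lastCases <;>
    simp only [Fin.sum_univ_two, KK_castSucc_castSucc, KK_castSucc_last, KK_last_castSucc,
      KK_last_last, KKInv_castSucc_castSucc, KKInv_castSucc_last, KKInv_last_castSucc,
      KKInv_last_last, Matrix.one_apply_eq, Matrix.one_apply_ne (Fin.castSucc_lt_last _).ne,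
      Matrix.one_apply_ne (Fin.castSucc_lt_last _).ne', hone_castSucc]
  case last.last => linear_combination hεinv
  case last.cast => ring
  case cast.last α =>
    linear_combination -φ 0 * hmul α 0 - φ 1 * hmul α 1 - hone α + φ α * hεinv
  case cast.cast α β => linear_combination hmul α β

theorem inv_KK_eq_KKInv (hε : ε ≠ 0) (hh : IsUnit h.det) : (KK ε h φ)⁻¹ = KKInv ε h φ :=
  Matrix.inv_eq_right_inv (KK_mul_KKInv ε h φ hε hh)

end KaluzaKlein

section Derivatives

variable {ε : ℝ} {hm : (Fin 3 → ℝ) → Matrix (Fin 2) (Fin 2) ℝ} {φf : (Fin 3 → ℝ) → Fin 2 → ℝ}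
  {x : Fin 3 → ℝ}

theorem pd_KK_castSucc_castSucc (hh : ∀ α β, DifferentiableAt ℝ (fun y => hm y α β) x)
    (hφ : ∀ α, DifferentiableAt ℝ (fun y => φf y α) x) (ν : Fin 3) (α β : Fin 2) :
    pd ν (fun y => KK ε (hm y) (φf y) α.castSucc β.castSucc) x =
      pd ν (fun y => hm y α β) x +
        ε * (pd ν (fun y => φf y α) x * φf x β + φf x α * pd ν (fun y => φf y β) x) := by
  have hφφ : DifferentiableAt ℝ (fun y => φf y α * φf y β) x := (hφ α).mul (hφ β)
  simp only [KK_castSucc_castSucc, mul_assoc]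
  rw [pd_add (hh α β) (hφφ.const_mul ε), pd_const_mul ε hφφ, pd_mul (hφ α) (hφ β)]

theorem pd_KK_last_castSucc (hφ : ∀ α, DifferentiableAt ℝ (fun y => φf y α) x) (ν : Fin 3)
    (β : Fin 2) :
    pd ν (fun y => KK ε (hm y) (φf y) (Fin.last 2) β.castSucc) x =
      ε * pd ν (fun y => φf y β) x := by
  simp only [KK_last_castSucc]
  exact pd_const_mul ε (hφ β)

end Derivatives

/-- For the Kaluza-Klein metric, the base Christoffel symbols are
Γ^δ_{αβ} = γ^δ_{αβ} − (ε/2) h^{δζ}(φ_β f_{ζα} + φ_α f_{ζβ}). -/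
theorem stmt_5
    (ε : ℝ) (hε : 0 < ε)
    (hm : (Fin 3 → ℝ) → Matrix (Fin 2) (Fin 2) ℝ) (φf : (Fin 3 → ℝ) → Fin 2 → ℝ)
    (hsm : ∀ α β, ContDiff ℝ (⊤ : ℕ∞) fun x => hm x α β)
    (φsm : ∀ α, ContDiff ℝ (⊤ : ℕ∞) fun x => φf x α)
    (hinv : ∀ x, IsUnit (hm x).det)
    (hind : ∀ x t, hm (Function.update x 2 t) = hm x)
    (φind : ∀ x t, φf (Function.update x 2 t) = φf x) :
    ∀ (x : Fin 3 → ℝ) (δ α β : Fin 2),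
      chris (fun y => KK ε (hm y) (φf y)) x δ.castSucc α.castSucc β.castSucc =
        gam hm x δ α β -
          (ε / 2) * ∑ ζ, (hm x)⁻¹ δ ζ * (φf x β * fs φf x ζ α + φf x α * fs φf x ζ β) := by
  intro x δ α β
  have dh (α β : Fin 2) : DifferentiableAt ℝ (fun y => hm y α β) x :=
    ((hsm α β).differentiable (by simp)).differentiableAt
  have dφ (α : Fin 2) : DifferentiableAt ℝ (fun y => φf y α) x :=
    ((φsm α).differentiable (by simp)).differentiableAt
  have pd_last_KK (μ ν : Fin 3) : pd (Fin.last 2) (fun y => KK ε (hm y) (φf y) μ ν) x = 0 :=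
    pd_eq_zero_of_update_eq fun t => congrArg₂ (fun h φ => KK ε h φ μ ν) (hind x t) (φind x t)
  simp only [chris, gam, fs]
  rw [inv_KK_eq_KKInv ε (hm x) (φf x) hε.ne' (hinv x), Fin.sum_univ_castSucc]
  simp only [pd_last_KK]
  simp only [KKInv_castSucc_castSucc, KKInv_castSucc_last, pd_KK_castSucc_castSucc dh dφ,
    pd_KK_last_castSucc dφ, Fin.sum_univ_two]
  ring
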